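/- arXiv:2209.03930 — 2 statements merged into one kernel-verified Lean document; each statement's English description precedes it below -/
import Mathlib

section
/- Let G be a graph that has a partition Π_1 ∪ ⋯ ∪ Π_k of V(G) with k ≥ 2 such that for each i ∈ [k] there exists U_i ⊆ Π_i with N_G[U_i] ⊆ Π_i and such that every vertex x ∈ Π_i − U_i with N_G(x) ∩ U_i ≠ ∅ has at least two neighbors in U_i. Then k ≤ ℓ_G. -/
open SimpleGraph
open scoped Function

/-- The set of vertices eventually observed in the power domination process started
from `S`: first the closed neighborhood of `S` is observed (domination step), then
repeatedly any vertex that is the unique unobserved neighbor of an observed vertex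
becomes observed (propagation step). -/
inductive PDObserved {V : Type*} (G : SimpleGraph V) (S : Set V) : V → Prop
  | init (v : V) (hv : v ∈ S) : PDObserved G S v
  | dom (u v : V) (hu : u ∈ S) (h : G.Adj u v) : PDObserved G S v
  | force (u v : V) (hu : PDObserved G S u) (h : G.Adj u v)
      (hall : ∀ w, G.Adj u w → w ≠ v → PDObserved G S w) : PDObserved G S v

/-- `S` is a power dominating set of `G` if every vertex is eventually observed. -/
def IsPowerDominatingSet {V : Type*} (G : SimpleGraph V) (S : Set V) : Prop :=
  ∀ v, PDObserved G S v

/-- The power domination number: the minimum cardinality of a power dominating set. -/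
noncomputable def powerDominationNumber {V : Type*} (G : SimpleGraph V) : ℕ :=
  sInf {n | ∃ S : Set V, S.ncard = n ∧ IsPowerDominatingSet G S}

/-- A family `π` indexed by a type with at least two elements is a failed power
dominating partition of `G` if it is a partition of `V(G)` into nonempty parts and
for each part `π i`, the complement `V(G) - π i` is not a power dominating set. -/
def IsFailedPDPartition {V : Type*} (G : SimpleGraph V) {ι : Type*} (π : ι → Set V) : Prop :=
  2 ≤ Nat.card ι ∧ (∀ i, (π i).Nonempty) ∧ Pairwise (Disjoint on π) ∧
    (⋃ i, π i) = Set.univ ∧ ∀ i, ¬ IsPowerDominatingSet G ((π i)ᶜ)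

/-- `ℓ_G`: the maximum `k` such that `G` has a failed power dominating partition into
`k` parts, or `1` if no failed power dominating partition exists. -/
noncomputable def ellPD {V : Type*} (G : SimpleGraph V) : ℕ :=
  sSup ({1} ∪ {k | ∃ π : Fin k → Set V, IsFailedPDPartition G π})

/-! Since `N[U_i] ⊆ Π_i`, the set `V - Π_i` dominates no vertex of `U_i`, and no vertex of `U_i`
can ever be forced: the forcing vertex would lie outside `U_i` (inductively) while having a
neighbour in `U_i`, hence a second, still unobserved, one. So the given partition is a failed
power dominating partition, and `ℓ_G` is a supremum bounded by `|V(G)|`. -/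

theorem Nat.card_le_of_pairwise_disjoint_nonempty {V ι : Type*} [Finite V] {π : ι → Set V}
    (hne : ∀ i, (π i).Nonempty) (hdisj : Pairwise (Disjoint on π)) : Nat.card ι ≤ Nat.card V := by
  refine Nat.card_le_card_of_injective (fun i => (hne i).some) fun i j hij => ?_
  by_contra hij'
  have hij : (hne i).some = (hne j).some := hij
  exact Set.disjoint_left.mp (hdisj hij') (hne i).some_mem (hij ▸ (hne j).some_mem)

theorem le_ellPD {V : Type*} [Finite V] {G : SimpleGraph V} {k : ℕ} {π : Fin k → Set V}
    (hπ : IsFailedPDPartition G π) : k ≤ ellPD G := by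
  refine le_csSup ⟨max 1 (Nat.card V), ?_⟩ (Or.inr ⟨π, hπ⟩)
  rintro m (rfl | ⟨ρ, -, hρne, hρdisj, -⟩)
  · exact le_max_left _ _
  · simpa using le_max_of_le_right (Nat.card_le_of_pairwise_disjoint_nonempty hρne hρdisj)

theorem PDObserved.notMem_of_fort {V : Type*} {G : SimpleGraph V} {S U : Set V}
    (hUS : ∀ u ∈ U, u ∉ S) (hNS : ∀ u ∈ U, ∀ w, G.Adj u w → w ∉ S)
    (hfort : ∀ x ∉ U, (G.neighborSet x ∩ U).Nonempty → 2 ≤ (G.neighborSet x ∩ U).ncard)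
    {v : V} (hv : PDObserved G S v) : v ∉ U := by
  induction hv with
  | init v hvS => exact fun hvU => hUS v hvU hvS
  | dom u v huS hadj => exact fun hvU => hNS v hvU u hadj.symm huS
  | force u v _ hadj _ ihu ihall =>
    intro hvU
    have htwo : 1 < (G.neighborSet u ∩ U).ncard := hfort u ihu ⟨v, hadj, hvU⟩
    obtain ⟨w, ⟨huw, hwU⟩, hwv⟩ := Set.exists_ne_of_one_lt_ncard htwo v
    exact ihall w huw hwv hwU

theorem not_isPowerDominatingSet_compl_of_fort {V : Type*} {G : SimpleGraph V} {P U : Set V}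
    (hUne : U.Nonempty) (hUP : U ⊆ P) (hNP : ∀ u ∈ U, G.neighborSet u ⊆ P)
    (hfort : ∀ x ∈ P \ U, (G.neighborSet x ∩ U).Nonempty → 2 ≤ (G.neighborSet x ∩ U).ncard) :
    ¬ IsPowerDominatingSet G Pᶜ := by
  obtain ⟨u, hu⟩ := hUne
  refine fun hpd => PDObserved.notMem_of_fort (fun u hu => not_not.2 (hUP hu))
    (fun u hu w huw => not_not.2 (hNP u hu huw)) (fun x hxU hx => ?_) (hpd u) hu
  obtain ⟨w, hxw, hwU⟩ := hx
  exact hfort x ⟨hNP w hwU hxw.symm, hxU⟩ ⟨w, hxw, hwU⟩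

/-- Observation: Let `G` be a graph with a partition `Π_1 ∪ ⋯ ∪ Π_k` of
`V(G)`, `k ≥ 2`, such that for each `i` there exists `U_i ⊆ Π_i` with
`N_G[U_i] ⊆ Π_i`, and every `x ∈ Π_i − U_i` with `N_G(x) ∩ U_i ≠ ∅` has at least two
neighbors in `U_i`.  Then `k ≤ ℓ_G`. -/
theorem le_ellPD_of_partition {V : Type*} [Fintype V] (G : SimpleGraph V) (k : ℕ)
    (hk : 2 ≤ k) (π : Fin k → Set V)
    (hne : ∀ i, (π i).Nonempty)
    (hdisj : Pairwise (Disjoint on π))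
    (hcover : (⋃ i, π i) = Set.univ)
    (hU : ∀ i, ∃ U : Set V, U.Nonempty ∧ U ⊆ π i ∧
      (∀ u ∈ U, G.neighborSet u ⊆ π i) ∧
      (∀ x ∈ π i \ U, (G.neighborSet x ∩ U).Nonempty → 2 ≤ (G.neighborSet x ∩ U).ncard)) :
    k ≤ ellPD G := by
  refine le_ellPD ⟨by simpa using hk, hne, hdisj, hcover, fun i => ?_⟩
  obtain ⟨U, hUne, hUP, hNP, hfort⟩ := hU i
  exact not_isPowerDominatingSet_compl_of_fort hUne hUP hNP hfort
end

section
/- If G is a necklace of diamonds of order n, then ℓ_G = γ_P(G); in particular, the partition Π_1 ∪ ⋯ ∪ Π_{n/4} of V(G) in which each part Π_i induces one of the diamonds is a failed power dominating partition of G. -/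
open SimpleGraph
open scoped Function

/-- The diamond graph `K_4 − e` (on `Fin 4`, with the edge `{0, 3}` missing). -/
def diamondGraph : SimpleGraph (Fin 4) :=
  SimpleGraph.fromEdgeSet {s(0, 1), s(0, 2), s(1, 2), s(1, 3), s(2, 3)}


/-!
In a cubic graph, the two degree-3 vertices `b`, `c` of an induced diamond have all their
neighbours inside the diamond and are twins: every other neighbour of one is a neighbour of the
other. If `S` misses the diamond, neither `b` nor `c` is ever observed, since an observed vertex
adjacent to one of them has both as unobserved neighbours and cannot force. So every power
dominating set meets all `k` diamonds, while the `k` vertices `b` dominate `G`: `γ_P(G) = k`, and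
the diamond partition is failed. Conversely each part of a failed partition meets every power
dominating set, so a failed partition has at most `γ_P(G)` parts.
-/

namespace SimpleGraph

variable {V : Type*} {G : SimpleGraph V}

theorem PDObserved.mono {S T : Set V} (hST : S ⊆ T) {v : V} (h : PDObserved G S v) :
    PDObserved G T v := by
  induction h with
  | init v hv => exact .init v (hST hv)
  | dom u v hu h => exact .dom u v (hST hu) h
  | force u v _ h _ ihu ihall => exact .force u v ihu h ihall

theorem IsPowerDominatingSet.mono {S T : Set V} (hST : S ⊆ T) (hS : IsPowerDominatingSet G S) :
    IsPowerDominatingSet G T :=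
  fun v => (hS v).mono hST

theorem isPowerDominatingSet_of_dominating {S : Set V}
    (h : ∀ v, ∃ u ∈ S, v ∈ insert u (G.neighborSet u)) : IsPowerDominatingSet G S := by
  intro v
  obtain ⟨u, hu, rfl | huv⟩ := h v
  · exact .init v hu
  · exact .dom u v hu huv

theorem not_pdObserved_of_twins {S : Set V} {b c : V} (hbc : b ≠ c)
    (htwin : ∀ u, u ≠ b → u ≠ c → (G.Adj b u ↔ G.Adj c u))
    (hS : Disjoint S (insert b (G.neighborSet b))) (hcS : c ∉ S) :
    ¬ PDObserved G S b := by
  have hbS : b ∉ S := Set.disjoint_right.mp hS (Set.mem_insert b _)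
  have hnbS : ∀ u ∈ S, ¬ G.Adj b u := fun u hu hbu =>
    Set.disjoint_left.mp hS hu (Set.mem_insert_of_mem b hbu)
  suffices ∀ v, PDObserved G S v → v ≠ b ∧ v ≠ c from fun hb => (this b hb).1 rfl
  intro v hv
  induction hv with
  | init v hv => exact ⟨fun h => hbS (h ▸ hv), fun h => hcS (h ▸ hv)⟩
  | dom u v hu huv =>
    refine ⟨fun h => hnbS u hu (h ▸ huv).symm, fun h => hnbS u hu ?_⟩
    exact (htwin u (fun hub => hbS (hub ▸ hu)) (G.ne_of_adj (h ▸ huv))).mpr (h ▸ huv).symm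
  | force u v _ huv _ ihu ihall =>
    constructor <;> rintro rfl
    · exact (ihall c ((htwin u ihu.1 ihu.2).mp huv.symm).symm hbc.symm).2 rfl
    · exact (ihall b ((htwin u ihu.1 ihu.2).mpr huv.symm).symm hbc).1 rfl

theorem neighborSet_eq_image_of_iso_induce {W : Type*} {H : SimpleGraph W} {s : Set V}
    (e : G.induce s ≃g H) {w : W} (hpos : 0 < (H.neighborSet w).ncard)
    (hdeg : (G.neighborSet (e.symm w)).ncard = (H.neighborSet w).ncard) :
    G.neighborSet (e.symm w) = (fun x => (e.symm x : V)) '' H.neighborSet w := by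
  have hinj : Function.Injective fun x => (e.symm x : V) :=
    Subtype.val_injective.comp e.symm.injective
  have hsub : (fun x => (e.symm x : V)) '' H.neighborSet w ⊆ G.neighborSet (e.symm w) := by
    rintro _ ⟨x, hx, rfl⟩
    exact e.symm.map_adj_iff.mpr hx
  refine (Set.eq_of_subset_of_ncard_le hsub ?_ (Set.finite_of_ncard_pos (hdeg ▸ hpos))).symm
  rw [Set.ncard_image_of_injective _ hinj, hdeg]

theorem le_ncard_of_forall_inter_nonempty {ι : Type*} [Finite ι] {σ : ι → Set V}
    (hdisj : Pairwise (Disjoint on σ)) {T : Set V} (hT : T.Finite)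
    (hmeet : ∀ i, (T ∩ σ i).Nonempty) :
    Nat.card ι ≤ T.ncard := by
  choose f hfT hfσ using hmeet
  have hinj : Function.Injective f := fun i j hij => by
    by_contra hne
    exact Set.disjoint_left.mp (hdisj hne) (hfσ i) (hij ▸ hfσ j)
  rw [← Set.ncard_range_of_injective hinj]
  exact Set.ncard_le_ncard (Set.range_subset_iff.mpr hfT) hT

theorem IsFailedPDPartition.card_le_ncard {ι : Type*} [Finite ι] {σ : ι → Set V}
    (hσ : IsFailedPDPartition G σ) {S : Set V} (hS : IsPowerDominatingSet G S)
    (hfin : S.Finite) : Nat.card ι ≤ S.ncard := by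
  obtain ⟨-, -, hdisj, -, hfail⟩ := hσ
  refine le_ncard_of_forall_inter_nonempty hdisj hfin fun i => ?_
  by_contra hempty
  exact hfail i (hS.mono fun x hx hxσ => hempty ⟨x, hx, hxσ⟩)

theorem powerDominationNumber_eq_of_isPowerDominatingSet {S : Set V} {k : ℕ}
    (hS : IsPowerDominatingSet G S) (hcard : S.ncard ≤ k)
    (hmin : ∀ T, IsPowerDominatingSet G T → k ≤ T.ncard) :
    powerDominationNumber G = k := by
  have hk : k ∈ {n | ∃ S : Set V, S.ncard = n ∧ IsPowerDominatingSet G S} :=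
    ⟨S, le_antisymm hcard (hmin S hS), hS⟩
  refine le_antisymm (Nat.sInf_le hk) (le_csInf ⟨k, hk⟩ ?_)
  rintro _ ⟨T, rfl, hT⟩
  exact hmin T hT

theorem ellPD_eq_of_isFailedPDPartition {k : ℕ} {π : Fin k → Set V}
    (hπ : IsFailedPDPartition G π)
    (hmax : ∀ m (σ : Fin m → Set V), IsFailedPDPartition G σ → m ≤ k) :
    ellPD G = k := by
  let A : Set ℕ := {1} ∪ {m | ∃ σ : Fin m → Set V, IsFailedPDPartition G σ}
  have hk : k ∈ A := Or.inr ⟨π, hπ⟩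
  have hbound : ∀ m ∈ A, m ≤ k := by
    rintro m (rfl | ⟨σ, hσ⟩)
    · simpa using hπ.1.trans' (by norm_num)
    · exact hmax m σ hσ
  exact le_antisymm (csSup_le ⟨k, hk⟩ hbound) (le_csSup ⟨k, hbound⟩ hk)

end SimpleGraph

open SimpleGraph

theorem diamondGraph_neighborSet_one : diamondGraph.neighborSet 1 = {0, 2, 3} := by
  ext j; fin_cases j <;> simp [diamondGraph]

theorem diamondGraph_neighborSet_two : diamondGraph.neighborSet 2 = {0, 1, 3} := by
  ext j; fin_cases j <;> simp [diamondGraph]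

theorem exists_twins_of_iso_diamondGraph {V : Type*} {G : SimpleGraph V}
    (hcubic : ∀ v : V, (G.neighborSet v).ncard = 3) {s : Set V}
    (e : G.induce s ≃g diamondGraph) :
    ∃ b c, b ≠ c ∧ c ∈ s ∧ insert b (G.neighborSet b) = s ∧
      ∀ u, u ≠ b → u ≠ c → (G.Adj b u ↔ G.Adj c u) := by
  set f : Fin 4 → V := fun j => (e.symm j : V)
  have hinj : Function.Injective f := Subtype.val_injective.comp e.symm.injective
  have hnbr (j : Fin 4) (t : Set (Fin 4)) (ht : diamondGraph.neighborSet j = t)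
      (hcard : t.ncard = 3) : G.neighborSet (f j) = f '' t := by
    rw [← ht, ← neighborSet_eq_image_of_iso_induce e (by rw [ht, hcard]; norm_num)
      (by rw [ht, hcard, hcubic])]
  have hb := hnbr 1 _ diamondGraph_neighborSet_one <|
    Set.ncard_eq_three.mpr ⟨0, 2, 3, by decide, by decide, by decide, rfl⟩
  have hc := hnbr 2 _ diamondGraph_neighborSet_two <|
    Set.ncard_eq_three.mpr ⟨0, 1, 3, by decide, by decide, by decide, rfl⟩
  simp only [Set.image_insert_eq, Set.image_singleton] at hb hc
  refine ⟨f 1, f 2, hinj.ne (by decide), (e.symm 2).2, ?_, fun u hub huc => ?_⟩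
  · ext v
    refine ⟨?_, fun hv => ?_⟩
    · rintro (rfl | hv)
      · exact (e.symm 1).2
      · obtain rfl | rfl | rfl := hb ▸ hv <;> exact (e.symm _).2
    · obtain ⟨j, hj⟩ : ∃ j, f j = v := ⟨e ⟨v, hv⟩, by simp [f]⟩
      subst hj
      rw [Set.mem_insert_iff, hb]
      fin_cases j <;> simp
  · rw [← mem_neighborSet, ← mem_neighborSet, hb, hc]
    simp [hub, huc]

theorem necklace_of_diamonds_ellPD_eq_general {V : Type*} (G : SimpleGraph V)
    (hcubic : ∀ v : V, (G.neighborSet v).ncard = 3)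
    (k : ℕ) (hk : 2 ≤ k) (π : Fin k → Set V)
    (hdisj : Pairwise (Disjoint on π)) (hcover : (⋃ i, π i) = Set.univ)
    (hdiamond : ∀ i, Nonempty (G.induce (π i) ≃g diamondGraph)) :
    ellPD G = powerDominationNumber G ∧ IsFailedPDPartition G π := by
  have : Finite V := Set.finite_univ_iff.mp <| hcover ▸ Set.finite_iUnion fun i =>
    have : Finite (π i) := .of_equiv _ (hdiamond i).some.toEquiv.symm
    Set.toFinite (π i)
  choose b c hbc hcπ hbπ htwin using fun i =>
    exists_twins_of_iso_diamondGraph hcubic (hdiamond i).some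
  have hmiss (S : Set V) (i : Fin k) (hS : Disjoint S (π i)) : ¬ IsPowerDominatingSet G S :=
    fun hPD => not_pdObserved_of_twins (hbc i) (htwin i) (hbπ i ▸ hS)
      (Set.disjoint_right.mp hS (hcπ i)) (hPD (b i))
  have hfailed : IsFailedPDPartition G π :=
    ⟨by simpa using hk, fun i => ⟨b i, hbπ i ▸ Set.mem_insert _ _⟩, hdisj, hcover,
      fun i => hmiss _ i disjoint_compl_left⟩
  have hmin (S : Set V) (hS : IsPowerDominatingSet G S) : k ≤ S.ncard := by
    simpa using le_ncard_of_forall_inter_nonempty hdisj S.toFinite fun i =>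
      Set.not_disjoint_iff_nonempty_inter.mp fun h => hmiss S i h hS
  have hB : IsPowerDominatingSet G (Set.range b) := isPowerDominatingSet_of_dominating fun v => by
    obtain ⟨i, hi⟩ := Set.mem_iUnion.mp (hcover ▸ Set.mem_univ v)
    exact ⟨b i, ⟨i, rfl⟩, (hbπ i).symm ▸ hi⟩
  have hBcard : (Set.range b).ncard ≤ k := by
    rw [← Set.image_univ]
    simpa using Set.ncard_image_le (f := b) Set.finite_univ
  have hγ := powerDominationNumber_eq_of_isPowerDominatingSet hB hBcard hmin
  refine ⟨(ellPD_eq_of_isFailedPDPartition hfailed fun m σ hσ => ?_).trans hγ.symm, hfailed⟩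
  simpa using (hσ.card_le_ncard hB (Set.toFinite _)).trans hBcard

/-- If `G` is a necklace of diamonds of order `n` (a connected cubic graph
obtained from `k ≥ 2` disjoint diamonds by adding a matching on the degree-2 vertices,
i.e. a connected cubic graph whose vertex set partitions into `k = n/4` parts each
inducing a diamond), then `ℓ_G = γ_P(G)`; in particular, the partition in which each
part induces one of the diamonds is a failed power dominating partition of `G`. -/
theorem necklace_of_diamonds_ellPD_eq {V : Type*} [Fintype V] (G : SimpleGraph V)
    (hconn : G.Connected) (hcubic : ∀ v : V, (G.neighborSet v).ncard = 3)
    (k : ℕ) (hk : 2 ≤ k) (π : Fin k → Set V)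
    (hdisj : Pairwise (Disjoint on π)) (hcover : (⋃ i, π i) = Set.univ)
    (hdiamond : ∀ i, Nonempty (G.induce (π i) ≃g diamondGraph)) :
    ellPD G = powerDominationNumber G ∧ IsFailedPDPartition G π :=
  necklace_of_diamonds_ellPD_eq_general G hcubic k hk π hdisj hcover hdiamond
end
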